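/- arXiv:2406.18369 — 6 statements merged into one kernel-verified Lean document; each statement's English description precedes it below -/
import Mathlib

section
/- Let l₁, l₂ > 0. Then the number of pairs of positive integers (m, n) with m²π²/l₁² + n²π²/l₂² ≤ λ, divided by λ, tends to l₁l₂/(4π) as λ → ∞. (This is Weyl's law for the Dirichlet eigenvalues of a rectangle with side lengths l₁ and l₂.) -/
/-!
Put `Λ = s²`. The eigenvalue condition becomes `(m / a)² + (n / b)² ≤ 1` with semi-axes
`a = l₁ s / π`, `b = l₂ s / π`, so `N(Λ)` counts the positive lattice points under the graph of the
decreasing function `f x = b √(1 - (x / a)²)` on `[0, a]`. Column by column this is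
`∑_{1 ≤ m ≤ a} ⌊f m⌋`, and comparing the sum of a monotone function with its integral shows that it
differs from the area `π a b / 4 = l₁ l₂ Λ / (4π)` by at most `a + b = O(√Λ)`: one unit per column
lost to the floors, and `f 0 = b` lost in the sum-integral comparison.
-/

open Real Filter Finset MeasureTheory intervalIntegral Topology

lemma integral_sqrt_one_sub_sq_zero_one : ∫ x in (0:ℝ)..1, √(1 - x ^ 2) = π / 4 := by
  have hc : Continuous fun x : ℝ => √(1 - x ^ 2) := by fun_prop
  have hsymm := integral_comp_neg (a := 0) (b := 1) (f := fun x : ℝ => √(1 - x ^ 2))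
  simp only [neg_sq, neg_zero] at hsymm
  have hsplit : (∫ x in (-1:ℝ)..0, √(1 - x ^ 2)) + ∫ x in (0:ℝ)..1, √(1 - x ^ 2) =
      ∫ x in (-1:ℝ)..1, √(1 - x ^ 2) :=
    integral_add_adjacent_intervals (hc.intervalIntegrable _ _) (hc.intervalIntegrable _ _)
  rw [← hsymm, integral_sqrt_one_sub_sq] at hsplit
  linarith

lemma integral_quarter_ellipse (a b : ℝ) :
    ∫ x in (0:ℝ)..a, b * √(1 - (x / a) ^ 2) = π * a * b / 4 := by
  rcases eq_or_ne a 0 with rfl | ha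
  · simp
  simp_rw [div_eq_inv_mul _ a]
  rw [intervalIntegral.integral_const_mul,
    integral_comp_mul_left (fun x => √(1 - x ^ 2)) (inv_ne_zero ha), mul_zero,
    inv_mul_cancel₀ ha, integral_sqrt_one_sub_sq_zero_one, inv_inv, smul_eq_mul]
  ring

lemma sum_Icc_one_eq_sum_range {β : Type*} [AddCommMonoid β] (g : ℕ → β) (n : ℕ) :
    ∑ m ∈ Icc 1 n, g m = ∑ i ∈ range n, g (i + 1) := by
  rw [range_eq_Ico, sum_Ico_add' g 0 n 1, zero_add, Ico_add_one_right_eq_Icc]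

lemma card_positive_points_under_graph_eq_sum (M : ℕ) (G : ℕ → ℕ) :
    Nat.card {p : ℕ × ℕ // 0 < p.1 ∧ 0 < p.2 ∧ p.1 ≤ M ∧ p.2 ≤ G p.1} =
      ∑ m ∈ Icc 1 M, G m := by
  classical
  let S : Finset (ℕ × ℕ) := (Icc 1 M).biUnion fun m => {m} ×ˢ Icc 1 (G m)
  have hS : ∀ p : ℕ × ℕ, (0 < p.1 ∧ 0 < p.2 ∧ p.1 ≤ M ∧ p.2 ≤ G p.1) ↔ p ∈ S := by
    rintro ⟨m, n⟩
    simp only [S, mem_biUnion, mem_product, mem_singleton, mem_Icc]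
    grind
  rw [Nat.card_congr (Equiv.subtypeEquivRight hS), Nat.card_eq_fintype_card, Fintype.card_coe,
    card_biUnion fun a _ b _ hab => disjoint_product.2 (.inl (disjoint_singleton.2 hab))]
  simp

noncomputable def latticeCountUnder (f : ℝ → ℝ) (X : ℝ) : ℕ :=
  Nat.card {p : ℕ × ℕ // 0 < p.1 ∧ 0 < p.2 ∧ (p.1 : ℝ) ≤ X ∧ (p.2 : ℝ) ≤ f p.1}

lemma latticeCountUnder_eq_sum_floor (f : ℝ → ℝ) (X : ℝ) :
    latticeCountUnder f X = ∑ m ∈ Icc 1 ⌊X⌋₊, ⌊f m⌋₊ := by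
  rw [latticeCountUnder, ← card_positive_points_under_graph_eq_sum]
  refine Nat.card_congr (Equiv.subtypeEquivRight fun p => ?_)
  refine and_congr_right fun hm => and_congr_right fun hn => ?_
  rw [Nat.le_floor_iff' hm.ne', Nat.le_floor_iff' hn.ne']

namespace AntitoneOn

variable {f : ℝ → ℝ} {X : ℝ}

lemma intervalIntegrable_of_Ici (hf : AntitoneOn f (Set.Ici 0)) (hX : 0 ≤ X) :
    IntervalIntegrable f volume 0 X :=
  (hf.mono (Set.uIcc_of_le hX ▸ Set.Icc_subset_Ici_self)).intervalIntegrable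

lemma sum_Icc_one_floor_le_integral (hf : AntitoneOn f (Set.Ici 0))
    (hf₀ : ∀ x, 0 ≤ x → 0 ≤ f x) (hX : 0 ≤ X) :
    ∑ m ∈ Icc 1 ⌊X⌋₊, f m ≤ ∫ x in 0..X, f x := by
  have hsum := (hf.mono Set.Icc_subset_Ici_self).sum_le_integral (x₀ := 0) (a := ⌊X⌋₊)
  simp only [zero_add] at hsum
  rw [sum_Icc_one_eq_sum_range]
  exact hsum.trans (integral_mono_interval le_rfl (Nat.cast_nonneg _) (Nat.floor_le hX)
    (ae_restrict_of_forall_mem measurableSet_Ioc fun x hx => hf₀ x hx.1.le)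
    (hf.intervalIntegrable_of_Ici hX))

lemma integral_le_add_sum_Icc_one_floor (hf : AntitoneOn f (Set.Ici 0))
    (hf₀ : ∀ x, 0 ≤ x → 0 ≤ f x) (hX : 0 ≤ X) :
    ∫ x in 0..X, f x ≤ f 0 + ∑ m ∈ Icc 1 ⌊X⌋₊, f m := by
  have hint := (hf.mono Set.Icc_subset_Ici_self).integral_le_sum (x₀ := 0) (a := ⌊X⌋₊ + 1)
  simp only [zero_add] at hint
  rw [sum_range_succ', Nat.cast_zero] at hint
  rw [sum_Icc_one_eq_sum_range, add_comm]
  refine le_trans ?_ hint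
  exact integral_mono_interval le_rfl hX (by push_cast; exact (Nat.lt_floor_add_one X).le)
    (ae_restrict_of_forall_mem measurableSet_Ioc fun x hx => hf₀ x hx.1.le)
    (hf.intervalIntegrable_of_Ici (by positivity))

lemma latticeCountUnder_le_integral (hf : AntitoneOn f (Set.Ici 0))
    (hf₀ : ∀ x, 0 ≤ x → 0 ≤ f x) (hX : 0 ≤ X) :
    (latticeCountUnder f X : ℝ) ≤ ∫ x in 0..X, f x := by
  rw [latticeCountUnder_eq_sum_floor, Nat.cast_sum]
  exact (sum_le_sum fun (m : ℕ) _ => Nat.floor_le (hf₀ m (Nat.cast_nonneg m))).trans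
    (hf.sum_Icc_one_floor_le_integral hf₀ hX)

lemma integral_sub_le_latticeCountUnder (hf : AntitoneOn f (Set.Ici 0))
    (hf₀ : ∀ x, 0 ≤ x → 0 ≤ f x) (hX : 0 ≤ X) :
    (∫ x in 0..X, f x) - f 0 - X ≤ latticeCountUnder f X := by
  rw [latticeCountUnder_eq_sum_floor, Nat.cast_sum]
  have hfloor : ∑ m ∈ Icc 1 ⌊X⌋₊, (f m - 1) ≤ ∑ m ∈ Icc 1 ⌊X⌋₊, (⌊f m⌋₊ : ℝ) :=
    sum_le_sum fun m _ => (Nat.sub_one_lt_floor _).le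
  rw [sum_sub_distrib, sum_const, Nat.card_Icc, nsmul_one, add_tsub_cancel_right] at hfloor
  linarith [hf.integral_le_add_sum_Icc_one_floor hf₀ hX, Nat.floor_le hX]

end AntitoneOn

lemma antitoneOn_mul_sqrt_one_sub_div_sq (a : ℝ) {b : ℝ} (hb : 0 ≤ b) :
    AntitoneOn (fun x => b * √(1 - (x / a) ^ 2)) (Set.Ici 0) := by
  intro x hx y _ hxy
  have hx : (0:ℝ) ≤ x := hx
  simp only [div_pow]
  gcongr

lemma div_sq_add_div_sq_le_one_iff {x y a b : ℝ} (hx : 0 ≤ x) (hy : 0 ≤ y) (ha : 0 < a)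
    (hb : 0 < b) : (x / a) ^ 2 + (y / b) ^ 2 ≤ 1 ↔ x ≤ a ∧ y ≤ b * √(1 - (x / a) ^ 2) := by
  have hxa : x ≤ a ↔ (x / a) ^ 2 ≤ 1 := by rw [sq_le_one_iff₀ (by positivity), div_le_one ha]
  rw [← div_le_iff₀' hb, hxa]
  constructor
  · intro h
    exact ⟨by nlinarith, le_sqrt_of_sq_le (by linarith)⟩
  · rintro ⟨hx1, hy⟩
    linarith [(le_sqrt (by positivity) (by linarith)).1 hy]

lemma latticeCountUnder_quarter_ellipse_bounds {a b : ℝ} (ha : 0 ≤ a) (hb : 0 ≤ b) :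
    π * a * b / 4 - (a + b) ≤ latticeCountUnder (fun x => b * √(1 - (x / a) ^ 2)) a ∧
      (latticeCountUnder (fun x => b * √(1 - (x / a) ^ 2)) a : ℝ) ≤ π * a * b / 4 := by
  have hf := antitoneOn_mul_sqrt_one_sub_div_sq a hb
  have hf₀ : ∀ x : ℝ, 0 ≤ x → 0 ≤ b * √(1 - (x / a) ^ 2) := fun x _ => by positivity
  have hlow := hf.integral_sub_le_latticeCountUnder hf₀ ha
  have hup := hf.latticeCountUnder_le_integral hf₀ ha
  rw [integral_quarter_ellipse] at hlow hup
  exact ⟨by simpa [add_comm a b, sub_sub] using hlow, hup⟩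

noncomputable def rectangleDirichletCount (l₁ l₂ Λ : ℝ) : ℕ :=
  Nat.card {p : ℕ × ℕ // 0 < p.1 ∧ 0 < p.2 ∧
    (p.1 : ℝ) ^ 2 * π ^ 2 / l₁ ^ 2 + (p.2 : ℝ) ^ 2 * π ^ 2 / l₂ ^ 2 ≤ Λ}

lemma sq_mul_pi_sq_div_sq_eq (x : ℝ) {l s : ℝ} (hl : 0 < l) (hs : 0 < s) :
    x ^ 2 * π ^ 2 / l ^ 2 = s ^ 2 * (x / (l * s / π)) ^ 2 := by
  have := pi_pos
  field_simp

lemma rectangleDirichletCount_sq_eq {l₁ l₂ s : ℝ} (h₁ : 0 < l₁) (h₂ : 0 < l₂) (hs : 0 < s) :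
    rectangleDirichletCount l₁ l₂ (s ^ 2) =
      latticeCountUnder (fun x => l₂ * s / π * √(1 - (x / (l₁ * s / π)) ^ 2)) (l₁ * s / π) := by
  have := pi_pos
  refine Nat.card_congr (Equiv.subtypeEquivRight fun p => ?_)
  refine and_congr_right fun hm => and_congr_right fun hn => ?_
  rw [sq_mul_pi_sq_div_sq_eq _ h₁ hs, sq_mul_pi_sq_div_sq_eq _ h₂ hs, ← mul_add,
    mul_le_iff_le_one_right (by positivity)]
  exact div_sq_add_div_sq_le_one_iff (Nat.cast_nonneg _) (Nat.cast_nonneg _) (by positivity)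
    (by positivity)

lemma rectangleDirichletCount_sq_bounds {l₁ l₂ s : ℝ} (h₁ : 0 < l₁) (h₂ : 0 < l₂) (hs : 0 < s) :
    l₁ * l₂ / (4 * π) * s ^ 2 - (l₁ + l₂) / π * s ≤ rectangleDirichletCount l₁ l₂ (s ^ 2) ∧
      (rectangleDirichletCount l₁ l₂ (s ^ 2) : ℝ) ≤ l₁ * l₂ / (4 * π) * s ^ 2 := by
  have := pi_pos
  obtain ⟨hlo, hhi⟩ := latticeCountUnder_quarter_ellipse_bounds (a := l₁ * s / π)
    (b := l₂ * s / π) (by positivity) (by positivity)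
  rw [← rectangleDirichletCount_sq_eq h₁ h₂ hs] at hlo hhi
  refine ⟨le_of_eq_of_le ?_ hlo, hhi.trans_eq ?_⟩ <;> field_simp

/-- Weyl's law for the Dirichlet eigenvalues of a rectangle with side lengths `l₁`, `l₂`:
the number of pairs of positive integers `(m, n)` with
`m²π²/l₁² + n²π²/l₂² ≤ Λ`, divided by `Λ`, tends to `l₁l₂/(4π)` as `Λ → ∞`. -/
theorem weyl_law_rectangle_dirichlet (l₁ l₂ : ℝ) (h₁ : 0 < l₁) (h₂ : 0 < l₂) :
    Filter.Tendsto
      (fun Λ : ℝ =>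
        (Nat.card {p : ℕ × ℕ // 0 < p.1 ∧ 0 < p.2 ∧
          (p.1 : ℝ) ^ 2 * Real.pi ^ 2 / l₁ ^ 2 + (p.2 : ℝ) ^ 2 * Real.pi ^ 2 / l₂ ^ 2 ≤ Λ} : ℝ)
          / Λ)
      Filter.atTop (nhds (l₁ * l₂ / (4 * Real.pi))) := by
  change Tendsto (fun Λ => (rectangleDirichletCount l₁ l₂ Λ : ℝ) / Λ) atTop
    (𝓝 (l₁ * l₂ / (4 * π)))
  have hlow : Tendsto (fun Λ => l₁ * l₂ / (4 * π) - (l₁ + l₂) / π / √Λ) atTop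
      (𝓝 (l₁ * l₂ / (4 * π))) := by
    simpa using tendsto_const_nhds.sub (tendsto_const_nhds.div_atTop tendsto_sqrt_atTop)
  have hbounds : ∀ᶠ Λ in atTop,
      l₁ * l₂ / (4 * π) - (l₁ + l₂) / π / √Λ ≤ rectangleDirichletCount l₁ l₂ Λ / Λ ∧
        rectangleDirichletCount l₁ l₂ Λ / Λ ≤ l₁ * l₂ / (4 * π) := by
    filter_upwards [eventually_gt_atTop 0] with Λ hΛ
    obtain ⟨s, hs, rfl⟩ : ∃ s > 0, Λ = s ^ 2 := ⟨√Λ, sqrt_pos.2 hΛ, (sq_sqrt hΛ.le).symm⟩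
    obtain ⟨hlo, hhi⟩ := rectangleDirichletCount_sq_bounds h₁ h₂ hs
    rw [sqrt_sq hs.le, le_div_iff₀ hΛ, div_le_iff₀ hΛ]
    exact ⟨le_of_eq_of_le (by field_simp) hlo, hhi⟩
  exact tendsto_of_tendsto_of_tendsto_of_le_of_le' hlow tendsto_const_nhds
    (hbounds.mono fun _ => And.left) (hbounds.mono fun _ => And.right)
end

section
/- Let n ≥ 1 and fix y ∈ ℝⁿ. The function h(x,t) = (4πt)^{−n/2} · exp(−‖x−y‖²/(4t)), defined for x ∈ ℝⁿ and t > 0, satisfies the heat equation ∂h/∂t = Σᵢ ∂²h/∂xᵢ² for all x ∈ ℝⁿ and t > 0. -/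
/-! Differentiating `(4πt)^p exp(-‖x-y‖²/(4t))` gives the factor `p/t + ‖x-y‖²/(4t²)` in time,
while the second derivative in the coordinate `xᵢ` gives `(xᵢ-yᵢ)²/(4t²) - 1/(2t)`. Summed over the
`n` coordinates the latter is `‖x-y‖²/(4t²) - n/(2t)`, which matches the former exactly for
`p = -n/2`. -/

open Real Finset

section Gaussian

variable (a b c K : ℝ)

theorem hasDerivAt_const_mul_exp_neg_sq_div (s : ℝ) :
    HasDerivAt (fun s => c * exp (-((s - a) ^ 2 + K) / b))
      (c * exp (-((s - a) ^ 2 + K) / b) * (-(2 * (s - a)) / b)) s := by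
  have hquad : HasDerivAt (fun s : ℝ => (s - a) ^ 2 + K) (2 * (s - a)) s := by
    simpa using (((hasDerivAt_id s).sub_const a).pow 2).add_const K
  have hexponent : HasDerivAt (fun s : ℝ => -((s - a) ^ 2 + K) / b) (-(2 * (s - a)) / b) s :=
    hquad.neg.div_const b
  exact hexponent.exp.const_mul c |>.congr_deriv (by ring)

theorem deriv_deriv_const_mul_exp_neg_sq_div (s : ℝ) :
    deriv (deriv (fun s => c * exp (-((s - a) ^ 2 + K) / b))) s
      = c * exp (-((s - a) ^ 2 + K) / b) * ((2 * (s - a)) ^ 2 / b ^ 2 - 2 / b) := by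
  have hderiv : deriv (fun s => c * exp (-((s - a) ^ 2 + K) / b))
      = fun s => c * exp (-((s - a) ^ 2 + K) / b) * (-(2 * (s - a)) / b) :=
    funext fun s => (hasDerivAt_const_mul_exp_neg_sq_div a b c K s).deriv
  have hlin : HasDerivAt (fun s : ℝ => -(2 * (s - a)) / b) (-2 / b) s := by
    simpa using (((hasDerivAt_id s).sub_const a).const_mul 2).neg.div_const b
  rw [hderiv]
  refine ((hasDerivAt_const_mul_exp_neg_sq_div a b c K s).mul hlin).deriv.trans ?_
  ring

end Gaussian

theorem hasDerivAt_rpow_mul_exp_neg_div {a b p S t : ℝ} (ha : a ≠ 0) (ht : t ≠ 0) :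
    HasDerivAt (fun t => (a * t) ^ p * exp (-S / (b * t)))
      ((a * t) ^ p * exp (-S / (b * t)) * (p / t + S / (b * t ^ 2))) t := by
  have hpow : HasDerivAt (fun t => (a * t) ^ p) (p * (a * t) ^ (p - 1) * a) t := by
    have hlin : HasDerivAt (fun t => a * t) a t := by simpa using (hasDerivAt_id t).const_mul a
    exact (hasDerivAt_rpow_const (Or.inl (mul_ne_zero ha ht))).comp t hlin
  have hexp : HasDerivAt (fun t => -S / (b * t)) (S / (b * t ^ 2)) t := by
    have hform : (fun t => -S / (b * t)) = fun t => -S / b * t⁻¹ := funext fun u => by ring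
    rw [hform]
    exact ((hasDerivAt_inv ht).const_mul (-S / b)).congr_deriv (by ring)
  refine (hpow.mul hexp.exp).congr_deriv ?_
  rw [rpow_sub_one (mul_ne_zero ha ht)]
  field_simp

theorem sum_update_sub_sq {ι : Type*} [Fintype ι] [DecidableEq ι] (x y : ι → ℝ) (i : ι) (s : ℝ) :
    ∑ j, (Function.update x i s j - y j) ^ 2
      = (s - y i) ^ 2 + ∑ j ∈ univ.erase i, (x j - y j) ^ 2 := by
  have hupdate : (fun j => (Function.update x i s j - y j) ^ 2)
      = Function.update (fun j => (x j - y j) ^ 2) i ((s - y i) ^ 2) := by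
    funext j
    rcases eq_or_ne j i with rfl | hj
    · simp
    · simp [hj]
  rw [hupdate, sum_update_of_mem (mem_univ i), erase_eq]

section HeatKernel

variable {ι : Type*} [Fintype ι] (p : ℝ) (x y : ι → ℝ) {t : ℝ}

theorem hasDerivAt_rpow_mul_exp_heat (ht : t ≠ 0) :
    HasDerivAt (fun t => (4 * π * t) ^ p * exp (-(∑ i, (x i - y i) ^ 2) / (4 * t)))
      ((4 * π * t) ^ p * exp (-(∑ i, (x i - y i) ^ 2) / (4 * t))
        * (p / t + (∑ i, (x i - y i) ^ 2) / (4 * t ^ 2))) t := by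
  simpa [mul_assoc] using
    hasDerivAt_rpow_mul_exp_neg_div (a := 4 * π) (b := 4) (by positivity) ht

theorem deriv_deriv_update_rpow_mul_exp_heat [DecidableEq ι] (ht : t ≠ 0) (i : ι) :
    deriv (deriv fun s =>
        (4 * π * t) ^ p * exp (-(∑ j, (Function.update x i s j - y j) ^ 2) / (4 * t))) (x i)
      = (4 * π * t) ^ p * exp (-(∑ j, (x j - y j) ^ 2) / (4 * t))
          * ((x i - y i) ^ 2 / (4 * t ^ 2) - 1 / (2 * t)) := by
  simp_rw [sum_update_sub_sq x y i]
  rw [deriv_deriv_const_mul_exp_neg_sq_div]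
  rw [← add_sum_erase univ (fun j => (x j - y j) ^ 2) (mem_univ i)]
  field_simp
  ring

end HeatKernel

theorem heat_kernel_satisfies_heat_equation_general (n : ℕ) (y : Fin n → ℝ) :
    let h : (Fin n → ℝ) → ℝ → ℝ := fun x t =>
      (4 * Real.pi * t) ^ (-(n : ℝ) / 2) * Real.exp (-(∑ i, (x i - y i) ^ 2) / (4 * t))
    ∀ (x : Fin n → ℝ) (t : ℝ), 0 < t →
      deriv (fun t' => h x t') t
        = ∑ i, deriv (deriv (fun s => h (Function.update x i s) t)) (x i) := by
  intro h x t ht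
  simp only [h, (hasDerivAt_rpow_mul_exp_heat _ x y ht.ne').deriv,
    deriv_deriv_update_rpow_mul_exp_heat _ x y ht.ne']
  rw [← mul_sum, sum_sub_distrib, ← sum_div, sum_const, card_univ, Fintype.card_fin, nsmul_eq_mul]
  field_simp
  ring

/-- The Euclidean heat kernel `h(x,t) = (4πt)^{−n/2} exp(−‖x−y‖²/(4t))` on `ℝⁿ`
(with `‖x−y‖² = ∑ i, (x i − y i)²`) satisfies the heat equation
`∂h/∂t = ∑ i, ∂²h/∂xᵢ²` for all `x ∈ ℝⁿ` and `t > 0`. -/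
theorem heat_kernel_satisfies_heat_equation (n : ℕ) (hn : 1 ≤ n) (y : Fin n → ℝ) :
    let h : (Fin n → ℝ) → ℝ → ℝ := fun x t =>
      (4 * Real.pi * t) ^ (-(n : ℝ) / 2) * Real.exp (-(∑ i, (x i - y i) ^ 2) / (4 * t))
    ∀ (x : Fin n → ℝ) (t : ℝ), 0 < t →
      deriv (fun t' => h x t') t
        = ∑ i, deriv (deriv (fun s => h (Function.update x i s) t)) (x i) :=
  heat_kernel_satisfies_heat_equation_general n y
end

section
/- Let c > 0 and let (λ_n)_{n≥1} be a sequence of nonnegative real numbers such that λ_n/n → c as n → ∞. Then t · Σ_{n=1}^∞ e^{−λ_n t} converges to 1/c as t → 0⁺. In particular, if λ_n/n → 4π/A for a bounded planar domain of area A (as given by Weyl's law), the heat trace satisfies Σ_{n=1}^∞ e^{−λ_n t} ~ A/(4πt) as t → 0. -/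
/-!
Since `λ_n / n → c`, for any `0 < a < c < b` there is a constant `K` with
`a n - K ≤ λ_n ≤ b n + K`. For the linear spectrum `λ_n = a n` the heat trace is the geometric
series `1 / (e^{a t} - 1) ~ 1 / (a t)`, and the shift by `K` only costs a factor `e^{± K t} → 1`.
Hence `t · ∑ e^{-λ_n t}` is eventually squeezed between numbers arbitrarily close to `1 / b`
and `1 / a`.
-/

open Filter Topology Real

lemma exists_le_add_of_eventually_le {u v : ℕ → ℝ} (h : ∀ᶠ n in atTop, u n ≤ v n) :
    ∃ K, ∀ n, u n ≤ v n + K := by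
  obtain ⟨K, hK⟩ := (isBoundedUnder_of_eventually_le
    (h.mono fun n hn => sub_nonpos.2 hn)).bddAbove_range
  exact ⟨K, fun n => sub_le_iff_le_add'.1 (hK ⟨n, rfl⟩)⟩

lemma tendsto_exp_mul_nhdsGT_zero (K : ℝ) : Tendsto (fun t => exp (K * t)) (𝓝[>] 0) (𝓝 1) :=
  ((continuous_exp.comp (continuous_const_mul K)).tendsto' 0 1 (by simp)).mono_left
    nhdsWithin_le_nhds

section

variable {lam : ℕ → ℝ} {a b c : ℝ}

lemma eventually_mul_le_of_lt_tendsto_div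
    (h : Tendsto (fun n : ℕ => lam n / n) atTop (𝓝 c)) (hac : a < c) :
    ∀ᶠ n in atTop, a * n ≤ lam n := by
  filter_upwards [h.eventually (lt_mem_nhds hac), eventually_gt_atTop 0] with n hn hpos
  exact ((lt_div_iff₀ (Nat.cast_pos.2 hpos)).1 hn).le

lemma eventually_le_mul_of_tendsto_div_lt
    (h : Tendsto (fun n : ℕ => lam n / n) atTop (𝓝 c)) (hcb : c < b) :
    ∀ᶠ n in atTop, lam n ≤ b * n := by
  filter_upwards [h.eventually (gt_mem_nhds hcb), eventually_gt_atTop 0] with n hn hpos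
  exact ((div_lt_iff₀ (Nat.cast_pos.2 hpos)).1 hn).le

end

noncomputable def heatTrace (lam : ℕ → ℝ) (t : ℝ) : ℝ :=
  ∑' n : ℕ, exp (-lam (n + 1) * t)

section

variable {lam lam' : ℕ → ℝ} {a b t : ℝ}

lemma hasSum_heatTrace_linear (hat : 0 < a * t) :
    HasSum (fun n : ℕ => exp (-(a * (n + 1 : ℕ)) * t)) (1 / (exp (a * t) - 1)) := by
  set q := exp (-(a * t))
  have hterm (n : ℕ) : exp (-(a * (n + 1 : ℕ)) * t) = q * q ^ n := by
    rw [← exp_nat_mul, ← exp_add]; push_cast; ring_nf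
  have hval : q * (1 - q)⁻¹ = 1 / (exp (a * t) - 1) := by
    have : exp (a * t) - 1 ≠ 0 := (sub_pos.2 (one_lt_exp_iff.2 hat)).ne'
    simp only [q, exp_neg]
    field_simp
  rw [funext hterm, ← hval]
  exact (hasSum_geometric_of_lt_one (exp_pos _).le
    (exp_lt_one_iff.2 (neg_lt_zero.2 hat))).mul_left q

lemma tendsto_mul_heatTrace_linear (ha : 0 < a) :
    Tendsto (fun t => t * heatTrace (fun n => a * n) t) (𝓝[>] 0) (𝓝 a⁻¹) := by
  have hslope : Tendsto (fun t => t⁻¹ * (exp (a * t) - 1)) (𝓝[>] 0) (𝓝 a) := by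
    simpa using ((hasDerivAt_id (0 : ℝ)).const_mul a).exp.tendsto_slope_zero_right
  refine (hslope.inv₀ ha.ne').congr' ?_
  filter_upwards [self_mem_nhdsWithin] with t (ht : 0 < t)
  rw [heatTrace, (hasSum_heatTrace_linear (mul_pos ha ht)).tsum_eq]
  simp [div_eq_mul_inv, mul_comm]

lemma heatTrace_add_const (K : ℝ) :
    heatTrace (fun n => lam n + K) t = exp (-(K * t)) * heatTrace lam t := by
  rw [heatTrace, heatTrace, ← tsum_mul_left]
  congr 1 with n
  rw [← exp_add]; ring_nf

lemma summable_heatTrace_of_le (hle : ∀ n, lam' n ≤ lam n) (ht : 0 ≤ t)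
    (hs : Summable fun n : ℕ => exp (-lam' (n + 1) * t)) :
    Summable fun n : ℕ => exp (-lam (n + 1) * t) := by
  refine hs.of_nonneg_of_le (fun n => (exp_pos _).le) fun n => exp_le_exp.2 ?_
  nlinarith [hle (n + 1)]

lemma heatTrace_anti (hle : ∀ n, lam' n ≤ lam n) (ht : 0 ≤ t)
    (hs : Summable fun n : ℕ => exp (-lam' (n + 1) * t)) :
    heatTrace lam t ≤ heatTrace lam' t := by
  refine (summable_heatTrace_of_le hle ht hs).tsum_le_tsum (fun n => exp_le_exp.2 ?_) hs
  nlinarith [hle (n + 1)]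

lemma summable_heatTrace_linear_add (ha : 0 < a) (ht : 0 < t) (K : ℝ) :
    Summable fun n : ℕ => exp (-(a * (n + 1 : ℕ) + K) * t) := by
  refine ((hasSum_heatTrace_linear (mul_pos ha ht)).summable.mul_left (exp (-(K * t)))).congr
    fun n => ?_
  rw [← exp_add]; ring_nf

lemma summable_heatTrace_of_eventually_le (ha : 0 < a) (h : ∀ᶠ n in atTop, a * n ≤ lam n)
    (ht : 0 < t) : Summable fun n : ℕ => exp (-lam (n + 1) * t) := by
  obtain ⟨K, hK⟩ := exists_le_add_of_eventually_le h
  exact summable_heatTrace_of_le (lam' := fun n => a * n + -K) (fun n => by linarith [hK n]) ht.le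
    (summable_heatTrace_linear_add ha ht _)

lemma eventually_mul_heatTrace_lt (ha : 0 < a) (h : ∀ᶠ n in atTop, a * n ≤ lam n) {u : ℝ}
    (hu : a⁻¹ < u) : ∀ᶠ t in 𝓝[>] 0, t * heatTrace lam t < u := by
  obtain ⟨K, hK⟩ := exists_le_add_of_eventually_le h
  have hbound := (tendsto_exp_mul_nhdsGT_zero K).mul (tendsto_mul_heatTrace_linear ha)
  rw [one_mul] at hbound
  filter_upwards [hbound.eventually (gt_mem_nhds hu), self_mem_nhdsWithin] with t hlt (ht : 0 < t)
  calc t * heatTrace lam t ≤ t * heatTrace (fun n => a * n + -K) t := by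
        gcongr
        exact heatTrace_anti (fun n => by linarith [hK n]) ht.le
          (summable_heatTrace_linear_add ha ht _)
    _ < u := by rwa [heatTrace_add_const, neg_mul, neg_neg, mul_left_comm]

lemma eventually_lt_mul_heatTrace (hb : 0 < b) (h : ∀ᶠ n in atTop, lam n ≤ b * n)
    (hs : ∀ t > 0, Summable fun n : ℕ => exp (-lam (n + 1) * t)) {l : ℝ}
    (hl : l < b⁻¹) : ∀ᶠ t in 𝓝[>] 0, l < t * heatTrace lam t := by
  obtain ⟨K, hK⟩ := exists_le_add_of_eventually_le h
  have hbound := (tendsto_exp_mul_nhdsGT_zero (-K)).mul (tendsto_mul_heatTrace_linear hb)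
  rw [one_mul] at hbound
  filter_upwards [hbound.eventually (lt_mem_nhds hl), self_mem_nhdsWithin] with t hlt (ht : 0 < t)
  calc l < t * heatTrace (fun n => b * n + K) t := by
        rwa [heatTrace_add_const, ← neg_mul, mul_left_comm]
    _ ≤ t * heatTrace lam t := by
        gcongr
        exact heatTrace_anti hK ht.le (hs t ht)

end

theorem heat_trace_leading_term_general (c : ℝ) (hc : 0 < c) (lam : ℕ → ℝ)
    (hweyl : Filter.Tendsto (fun n : ℕ => lam n / n) Filter.atTop (nhds c)) :
    Filter.Tendsto (fun t : ℝ => t * ∑' n : ℕ, Real.exp (-lam (n + 1) * t))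
      (nhdsWithin 0 (Set.Ioi 0)) (nhds (1 / c)) := by
  change Tendsto (fun t => t * heatTrace lam t) _ _
  have hs (t : ℝ) (ht : 0 < t) : Summable fun n : ℕ => exp (-lam (n + 1) * t) :=
    summable_heatTrace_of_eventually_le (half_pos hc)
      (eventually_mul_le_of_lt_tendsto_div hweyl (half_lt_self hc)) ht
  have hinv : Tendsto Inv.inv (𝓝 c) (𝓝 c⁻¹) := tendsto_inv₀ hc.ne'
  rw [one_div]
  refine tendsto_order.2 ⟨fun l hl => ?_, fun u hu => ?_⟩
  · obtain ⟨b, hlb, hcb⟩ :=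
      ((hinv.mono_left nhdsWithin_le_nhds).eventually (lt_mem_nhds hl)
      |>.and (self_mem_nhdsWithin : Set.Ioi c ∈ 𝓝[>] c)).exists
    exact eventually_lt_mul_heatTrace (hc.trans hcb)
      (eventually_le_mul_of_tendsto_div_lt hweyl hcb) hs hlb
  · obtain ⟨a, hau, ha, hac⟩ :=
      ((hinv.mono_left nhdsWithin_le_nhds).eventually (gt_mem_nhds hu)
      |>.and (Ioo_mem_nhdsLT hc)).exists
    exact eventually_mul_heatTrace_lt ha (eventually_mul_le_of_lt_tendsto_div hweyl hac) hau

/-- If `(λ_n)_{n ≥ 1}` is a sequence of nonnegative reals with `λ_n / n → c > 0`,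
then `t · ∑_{n=1}^∞ e^{−λ_n t} → 1/c` as `t → 0⁺`.  (With `c = 4π/A` from Weyl's law
for a planar domain of area `A`, this gives the leading heat trace asymptotics
`∑ e^{−λ_n t} ~ A/(4πt)`.) -/
theorem heat_trace_leading_term (c : ℝ) (hc : 0 < c) (lam : ℕ → ℝ)
    (hnonneg : ∀ n, 1 ≤ n → 0 ≤ lam n)
    (hweyl : Filter.Tendsto (fun n : ℕ => lam n / n) Filter.atTop (nhds c)) :
    Filter.Tendsto (fun t : ℝ => t * ∑' n : ℕ, Real.exp (-lam (n + 1) * t))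
      (nhdsWithin 0 (Set.Ioi 0)) (nhds (1 / c)) :=
  heat_trace_leading_term_general c hc lam hweyl
end

section
/- As θ → π from the left (with θ ∈ (3π/4, π)), the integral ∫_{−∞}^{∞} ds / ((1 + cosh(s)) · (cosh(πs/θ) − cos(π²/θ))) converges to 2/3. -/
/-!
At `θ = π` the integrand becomes `(1 + cosh s)⁻²`. With `t = tanh (s / 2)` one has
`dt = (1 + cosh s)⁻¹ ds` and `(1 + cosh s)⁻¹ = (1 - t²) / 2`, so `∫ (1 + cosh s)⁻² ds`
is `∫_{-1}^{1} (1 - t²) / 2 dt = 2 / 3`. For `θ ∈ (3π/4, π)` we have `π²/θ ∈ (π, 4π/3)`,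
so `cos (π²/θ) ≤ 0` and the integrand is dominated by the integrable `(1 + cosh s)⁻¹`;
dominated convergence concludes.
-/

open Real MeasureTheory Filter Set Topology

/-- `tanhHalf s = tanh (s / 2)`. -/
noncomputable def tanhHalf (s : ℝ) : ℝ := 1 - 2 / (exp s + 1)

lemma inv_one_add_cosh_eq (s : ℝ) : (1 + cosh s)⁻¹ = 2 * exp s / (exp s + 1) ^ 2 := by
  rw [cosh_eq, exp_neg]
  field_simp
  ring

lemma hasDerivAt_tanhHalf (s : ℝ) : HasDerivAt tanhHalf (1 + cosh s)⁻¹ s := by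
  have h := ((hasDerivAt_const s (2 : ℝ)).div ((hasDerivAt_exp s).add_const 1)
    (by positivity)).const_sub 1
  refine h.congr_deriv ?_
  rw [inv_one_add_cosh_eq]
  ring

lemma one_sub_tanhHalf_sq (s : ℝ) : 1 - tanhHalf s ^ 2 = 2 * (1 + cosh s)⁻¹ := by
  rw [inv_one_add_cosh_eq, tanhHalf]
  field_simp
  ring

lemma tendsto_tanhHalf_atTop : Tendsto tanhHalf atTop (𝓝 1) := by
  have h := (tendsto_const_nhds (x := (2 : ℝ))).div_atTop
    (tendsto_atTop_add_const_right _ 1 tendsto_exp_atTop) |>.const_sub 1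
  unfold tanhHalf
  simpa using h

lemma tendsto_tanhHalf_atBot : Tendsto tanhHalf atBot (𝓝 (-1)) := by
  have h := (tendsto_const_nhds (x := (2 : ℝ))).div (tendsto_exp_atBot.add_const 1)
    (by norm_num) |>.const_sub 1
  unfold tanhHalf
  rwa [show (-1 : ℝ) = 1 - 2 / (0 + 1) by norm_num]

lemma one_add_sq_div_four_le_one_add_cosh (s : ℝ) : (1 + s ^ 2) / 4 ≤ 1 + cosh s := by
  have hexp := quadratic_le_exp_of_nonneg (abs_nonneg s)
  have hexp' := add_one_le_exp (-|s|)
  rw [← cosh_abs, cosh_eq]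
  nlinarith [sq_abs s, abs_nonneg s]

lemma integrable_inv_one_add_cosh : Integrable fun s : ℝ => (1 + cosh s)⁻¹ := by
  refine (integrable_inv_one_add_sq.const_mul 4).mono' (by fun_prop) (ae_of_all _ fun s => ?_)
  calc ‖(1 + cosh s)⁻¹‖ = (1 + cosh s)⁻¹ := norm_of_nonneg (by positivity)
    _ ≤ ((1 + s ^ 2) / 4)⁻¹ := inv_anti₀ (by positivity) (one_add_sq_div_four_le_one_add_cosh s)
    _ = 4 * (1 + s ^ 2)⁻¹ := by rw [inv_div, div_eq_mul_inv]

lemma integral_inv_one_add_cosh_sq : ∫ s : ℝ, ((1 + cosh s) ^ 2)⁻¹ = 2 / 3 := by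
  have hderiv (s : ℝ) : HasDerivAt (fun s => (tanhHalf s - tanhHalf s ^ 3 / 3) / 2)
      ((1 + cosh s) ^ 2)⁻¹ s := by
    refine (((hasDerivAt_tanhHalf s).sub ((hasDerivAt_tanhHalf s).pow 3 |>.div_const 3))
      |>.div_const 2).congr_deriv ?_
    rw [Nat.add_one_sub_one, ← inv_pow]
    linear_combination ((1 + cosh s)⁻¹ / 2) * one_sub_tanhHalf_sq s
  have hint : Integrable fun s : ℝ => ((1 + cosh s) ^ 2)⁻¹ := by
    refine integrable_inv_one_add_cosh.mono' (by fun_prop) (ae_of_all _ fun s => ?_)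
    have hs : 1 ≤ 1 + cosh s := by linarith [one_le_cosh s]
    rw [norm_of_nonneg (by positivity)]
    exact inv_anti₀ (by positivity) (le_self_pow₀ hs two_ne_zero)
  have hlim (l : Filter ℝ) (a : ℝ) (h : Tendsto tanhHalf l (𝓝 a)) :
      Tendsto (fun s => (tanhHalf s - tanhHalf s ^ 3 / 3) / 2) l (𝓝 ((a - a ^ 3 / 3) / 2)) :=
    ((h.sub ((h.pow 3).div_const 3)).div_const 2)
  rw [integral_of_hasDerivAt_of_tendsto hderiv hint (hlim _ _ tendsto_tanhHalf_atBot)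
    (hlim _ _ tendsto_tanhHalf_atTop)]
  norm_num

lemma cos_pi_sq_div_nonpos {θ : ℝ} (h₁ : 2 * π / 3 ≤ θ) (h₂ : θ ≤ 2 * π) :
    cos (π ^ 2 / θ) ≤ 0 := by
  have hθ : 0 < θ := by linarith [pi_pos]
  apply cos_nonpos_of_pi_div_two_le_of_le
  · rw [le_div_iff₀ hθ]; nlinarith [pi_pos]
  · rw [div_le_iff₀ hθ]; nlinarith [pi_pos]

noncomputable def cornerIntegrand (θ s : ℝ) : ℝ :=
  1 / ((1 + cosh s) * (cosh (π * s / θ) - cos (π ^ 2 / θ)))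

lemma norm_cornerIntegrand_le {θ : ℝ} (hθ : cos (π ^ 2 / θ) ≤ 0) (s : ℝ) :
    ‖cornerIntegrand θ s‖ ≤ (1 + cosh s)⁻¹ := by
  have hs : 0 < 1 + cosh s := by linarith [one_le_cosh s]
  have hden : 1 ≤ cosh (π * s / θ) - cos (π ^ 2 / θ) := by linarith [one_le_cosh (π * s / θ)]
  rw [cornerIntegrand, norm_of_nonneg (by positivity), one_div, mul_inv]
  exact mul_le_of_le_one_right (inv_nonneg.2 hs.le) (inv_le_one_of_one_le₀ hden)

lemma tendsto_cornerIntegrand_nhds_pi (s : ℝ) :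
    Tendsto (cornerIntegrand · s) (𝓝 π) (𝓝 ((1 + cosh s) ^ 2)⁻¹) := by
  have hval : (1 + cosh s) * (cosh (π * s / π) - cos (π ^ 2 / π)) = (1 + cosh s) ^ 2 := by
    rw [mul_div_cancel_left₀ s pi_ne_zero, sq π, mul_div_cancel_right₀ π pi_ne_zero, cos_pi]
    ring
  have hcont : ContinuousAt (cornerIntegrand · s) π := by
    refine continuousAt_const.div (by fun_prop (disch := exact pi_ne_zero)) ?_
    rw [hval]
    positivity
  simpa only [cornerIntegrand, hval, one_div] using hcont.tendsto

/-- As `θ → π` from the left (with `θ ∈ (3π/4, π)`), the integral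
`∫_{−∞}^{∞} ds / ((1 + cosh s)(cosh(πs/θ) − cos(π²/θ)))` converges to `2/3`. -/
theorem corner_integral_tendsto :
    Filter.Tendsto
      (fun θ : ℝ => ∫ s : ℝ,
        1 / ((1 + Real.cosh s) * (Real.cosh (Real.pi * s / θ) - Real.cos (Real.pi ^ 2 / θ))))
      (nhdsWithin Real.pi (Set.Ioo (3 * Real.pi / 4) Real.pi))
      (nhds (2 / 3)) := by
  rw [← integral_inv_one_add_cosh_sq]
  have hmeas (θ : ℝ) : Measurable (cornerIntegrand θ) := by unfold cornerIntegrand; fun_prop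
  refine tendsto_integral_filter_of_dominated_convergence _
    (.of_forall fun θ => (hmeas θ).aestronglyMeasurable) ?_ integrable_inv_one_add_cosh
    (ae_of_all _ fun s => (tendsto_cornerIntegrand_nhds_pi s).mono_left nhdsWithin_le_nhds)
  filter_upwards [self_mem_nhdsWithin] with θ ⟨hθ₁, hθ₂⟩
  have hcos := cos_pi_sq_div_nonpos (θ := θ) (by linarith [pi_pos]) (by linarith [pi_pos])
  exact ae_of_all _ (norm_cornerIntegrand_le hcos)
end

section
/- Let ε' > 0. Then for every natural number N, the difference ∫_0^{ε'} (1 − e^{−δ²/t})/(4πt) dδ − (ε'/(4πt) − 1/(8√(πt))) divided by t^N tends to 0 as t → 0⁺. -/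
open MeasureTheory intervalIntegral

private lemma exp_div_pow_tendsto (c : ℝ) (hc : 0 < c) (M : ℕ) :
    Filter.Tendsto (fun t : ℝ => Real.exp (-c / t) / t ^ M)
      (nhdsWithin 0 (Set.Ioi 0)) (nhds 0) := by
  have h1 : Filter.Tendsto (fun t : ℝ => c / t) (nhdsWithin 0 (Set.Ioi 0)) Filter.atTop := by
    simpa [div_eq_mul_inv] using tendsto_inv_nhdsGT_zero.const_mul_atTop hc
  have h2 := ((Real.tendsto_pow_mul_exp_neg_atTop_nhds_zero M).comp h1).const_mul (c⁻¹ ^ M)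
  rw [mul_zero] at h2
  refine h2.congr' ?_
  filter_upwards [self_mem_nhdsWithin] with t ht
  have ht' : (t : ℝ) ≠ 0 := ne_of_gt ht
  simp only [Function.comp, div_pow, neg_div]
  field_simp
  rw [one_div, ← mul_pow, inv_mul_cancel₀ hc.ne', one_pow]

private lemma tail_integral_bound (ε' : ℝ) (hε : 0 < ε') {t : ℝ} (ht : 0 < t) :
    (∫ x in Set.Ioi ε', Real.exp (-(1 / t) * x ^ 2)) ≤ t / ε' * Real.exp (-ε' ^ 2 / t) := by
  have hb : 0 < ε' / t := div_pos hε ht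
  have h1 : (∫ x in Set.Ioi ε', Real.exp (-(1 / t) * x ^ 2))
      ≤ ∫ x in Set.Ioi ε', Real.exp (-(ε' / t) * x) := by
    refine setIntegral_mono_on ((integrable_exp_neg_mul_sq (by positivity : (0:ℝ) < 1/t)).integrableOn)
      (exp_neg_integrableOn_Ioi _ hb) measurableSet_Ioi ?_
    intro x hx
    apply Real.exp_le_exp.2
    have hx' : ε' ≤ x := le_of_lt hx
    rw [neg_mul, neg_mul, neg_le_neg_iff]
    rw [div_mul_eq_mul_div, one_div, inv_mul_eq_div, div_le_div_iff₀ ht ht]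
    have hx0 : (0:ℝ) ≤ x := le_trans hε.le hx'
    have h3 : ε' * x ≤ x ^ 2 := by nlinarith
    nlinarith [mul_le_mul_of_nonneg_right h3 ht.le]
  have h2 : (∫ x in Set.Ioi ε', Real.exp (-(ε' / t) * x)) = t / ε' * Real.exp (-ε' ^ 2 / t) := by
    have := MeasureTheory.integral_comp_mul_left_Ioi (fun x => Real.exp (-x)) ε' hb
    simp only [smul_eq_mul] at this
    calc (∫ x in Set.Ioi ε', Real.exp (-(ε' / t) * x))
        = ∫ x in Set.Ioi ε', (fun x => Real.exp (-x)) (ε' / t * x) := by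
          congr 1; ext x; simp [neg_mul]
      _ = (ε' / t)⁻¹ * ∫ x in Set.Ioi (ε' / t * ε'), Real.exp (-x) := this
      _ = t / ε' * Real.exp (-ε' ^ 2 / t) := by
          rw [integral_exp_neg_Ioi, inv_div]
          have h4 : ε' / t * ε' = ε' ^ 2 / t := by field_simp
          rw [h4, neg_div]
  linarith

/-- The heat-trace contribution of a strip of width `ε'` along a straight edge:
for every `N ∈ ℕ`,
`(∫_0^{ε'} (1 − e^{−δ²/t})/(4πt) dδ − (ε'/(4πt) − 1/(8√(πt)))) / t^N → 0` as `t → 0⁺`;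
that is, `∫_0^{ε'} (1 − e^{−δ²/t})/(4πt) dδ = ε'/(4πt) − 1/(8√(πt)) + O(t^∞)`. -/
theorem edge_heat_trace_expansion (ε' : ℝ) (hε : 0 < ε') (N : ℕ) :
    Filter.Tendsto
      (fun t : ℝ =>
        ((∫ δ in (0:ℝ)..ε', (1 - Real.exp (-δ ^ 2 / t)) / (4 * Real.pi * t))
          - (ε' / (4 * Real.pi * t) - 1 / (8 * Real.sqrt (Real.pi * t)))) / t ^ N)
      (nhdsWithin 0 (Set.Ioi 0)) (nhds 0) := by
  have pi_pos := Real.pi_pos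
  -- key identity on Ioi 0
  have key : ∀ t : ℝ, 0 < t →
      ((∫ δ in (0:ℝ)..ε', (1 - Real.exp (-δ ^ 2 / t)) / (4 * Real.pi * t))
          - (ε' / (4 * Real.pi * t) - 1 / (8 * Real.sqrt (Real.pi * t)))) / t ^ N
      = (∫ x in Set.Ioi ε', Real.exp (-(1 / t) * x ^ 2)) / (4 * Real.pi * t) / t ^ N := by
    intro t ht
    have ht' : (1:ℝ)/t > 0 := by positivity
    have hint : Integrable fun x : ℝ => Real.exp (-(1 / t) * x ^ 2) :=
      integrable_exp_neg_mul_sq ht'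
    have hfun : (fun δ : ℝ => Real.exp (-δ ^ 2 / t)) = fun δ => Real.exp (-(1 / t) * δ ^ 2) := by
      funext δ; congr 1; ring
    -- interval integral computation
    have hIc : IntervalIntegrable (fun _ : ℝ => (1:ℝ)) volume 0 ε' :=
      intervalIntegrable_const
    have hIe : IntervalIntegrable (fun δ : ℝ => Real.exp (-δ ^ 2 / t)) volume 0 ε' := by
      apply Continuous.intervalIntegrable
      continuity
    have h1 : (∫ δ in (0:ℝ)..ε', (1 - Real.exp (-δ ^ 2 / t)) / (4 * Real.pi * t))
        = (ε' - ∫ δ in (0:ℝ)..ε', Real.exp (-δ ^ 2 / t)) / (4 * Real.pi * t) := by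
      rw [intervalIntegral.integral_div, intervalIntegral.integral_sub hIc hIe,
        intervalIntegral.integral_const]
      simp
    -- split gaussian integral
    have hsplit : (∫ x in Set.Ioi (0:ℝ), Real.exp (-(1 / t) * x ^ 2))
        = (∫ x in Set.Ioc (0:ℝ) ε', Real.exp (-(1 / t) * x ^ 2))
          + ∫ x in Set.Ioi ε', Real.exp (-(1 / t) * x ^ 2) := by
      rw [← Set.Ioc_union_Ioi_eq_Ioi hε.le,
        setIntegral_union (Set.Ioc_disjoint_Ioi le_rfl) measurableSet_Ioi
          hint.integrableOn hint.integrableOn]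
    have hio : (∫ δ in (0:ℝ)..ε', Real.exp (-δ ^ 2 / t))
        = ∫ x in Set.Ioc (0:ℝ) ε', Real.exp (-(1 / t) * x ^ 2) := by
      rw [intervalIntegral.integral_of_le hε.le, hfun]
    have hg : (∫ x in Set.Ioi (0:ℝ), Real.exp (-(1 / t) * x ^ 2))
        = Real.sqrt (Real.pi * t) / 2 := by
      rw [integral_gaussian_Ioi]
      congr 2
      field_simp
    have hA : (∫ δ in (0:ℝ)..ε', Real.exp (-δ ^ 2 / t))
        = Real.sqrt (Real.pi * t) / 2 - ∫ x in Set.Ioi ε', Real.exp (-(1 / t) * x ^ 2) := by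
      rw [hio]; linarith [hsplit, hg]
    have hpt : 0 < Real.pi * t := by positivity
    have hs : Real.sqrt (Real.pi * t) * Real.sqrt (Real.pi * t) = Real.pi * t :=
      Real.mul_self_sqrt hpt.le
    have hs0 : 0 < Real.sqrt (Real.pi * t) := Real.sqrt_pos.2 hpt
    have hsq : 1 / (8 * Real.sqrt (Real.pi * t)) = Real.sqrt (Real.pi * t) / 2 / (4 * Real.pi * t) := by
      rw [div_div, div_eq_div_iff (by positivity) (by positivity)]
      nlinarith [hs]
    rw [h1, hA, hsq]
    field_simp
    ring
  -- squeeze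
  have hbound := exp_div_pow_tendsto (ε' ^ 2) (by positivity) N
  have hlim := hbound.const_mul (1 / (4 * Real.pi * ε'))
  rw [mul_zero] at hlim
  apply squeeze_zero' ?_ ?_ hlim
  · filter_upwards [self_mem_nhdsWithin] with t ht
    have ht0 : (0:ℝ) < t := ht
    rw [key t ht]
    have hT : 0 ≤ ∫ x in Set.Ioi ε', Real.exp (-(1 / t) * x ^ 2) :=
      setIntegral_nonneg measurableSet_Ioi (fun x _ => (Real.exp_pos _).le)
    have hc1 : (0:ℝ) < 4 * Real.pi * t := by positivity
    exact div_nonneg (div_nonneg hT hc1.le) (pow_nonneg ht0.le N)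
  · filter_upwards [self_mem_nhdsWithin] with t ht
    have ht0 : (0:ℝ) < t := ht
    rw [key t ht]
    have htb := tail_integral_bound ε' hε ht0
    have hc1 : (0:ℝ) < 4 * Real.pi * t := by positivity
    have hc2 : (0:ℝ) < t ^ N := pow_pos ht0 N
    have h1 : (∫ x in Set.Ioi ε', Real.exp (-(1 / t) * x ^ 2)) / (4 * Real.pi * t) / t ^ N
        ≤ (t / ε' * Real.exp (-ε' ^ 2 / t)) / (4 * Real.pi * t) / t ^ N := by
      exact div_le_div_of_nonneg_right (div_le_div_of_nonneg_right htb hc1.le) hc2.le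
    refine h1.trans (le_of_eq ?_)
    have ht' : (t:ℝ) ≠ 0 := ne_of_gt ht
    field_simp
end

section
/- Let R > 0 and θ ∈ (π/2, π). Then for every natural number N, the integral ∫_{−∞}^{∞} e^{−R²(1+cosh s)/(2t)} / ((1 + cosh s)(cosh(πs/θ) − cos(π²/θ))) ds divided by t^N tends to 0 as t → 0⁺; that is, this integral is O(t^∞) as t → 0. -/
/-!
For `t ≤ 1` the Gaussian-type factor splits as
`e^{-R²(1+cosh s)/(2t)} ≤ e^{-R²/(2t)} · e^{-R² cosh s/2}`, while the denominator is bounded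
below by `2(1 - cos(π²/θ)) > 0` because `π²/θ ∈ (π, 2π)`. Since `cosh s ≥ s²/2`, the remaining
integral of `e^{-R² cosh s/2}` over the denominator is finite, so the whole integral is
`O(e^{-R²/(2t)})`, which is `O(t^∞)`.
-/

open MeasureTheory Filter Topology Real

theorem Real.one_add_sq_div_two_le_cosh (x : ℝ) : 1 + x ^ 2 / 2 ≤ cosh x := by
  simpa [Finset.sum_range_succ] using
    sum_le_hasSum (Finset.range 2) (fun n _ => by rw [pow_mul]; positivity) (hasSum_cosh x)

theorem integrable_exp_neg_mul_cosh {a : ℝ} (ha : 0 < a) :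
    Integrable fun s => exp (-(a * cosh s)) := by
  refine (integrable_exp_neg_mul_sq (half_pos ha)).mono' (by fun_prop) ?_
  refine .of_forall fun s => ?_
  rw [norm_of_nonneg (exp_nonneg _), exp_le_exp]
  nlinarith [one_add_sq_div_two_le_cosh s]

theorem tendsto_exp_neg_div_div_pow_nhdsGT_zero {a : ℝ} (ha : 0 < a) (N : ℕ) :
    Tendsto (fun t => exp (-(a / t)) / t ^ N) (𝓝[>] 0) (𝓝 0) := by
  have h := ((tendsto_pow_mul_exp_neg_atTop_nhds_zero N).comp
    (tendsto_inv_nhdsGT_zero.const_mul_atTop ha)).mul_const (a ^ N)⁻¹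
  rw [zero_mul] at h
  refine h.congr fun t => ?_
  simp only [Function.comp_apply, mul_pow, div_eq_mul_inv, inv_pow]
  field_simp

theorem Real.exp_neg_mul_one_add_div_le {a c t : ℝ} (ha : 0 ≤ a) (hc : 0 ≤ c) (ht : 0 < t)
    (ht1 : t ≤ 1) : exp (-a * (1 + c) / t) ≤ exp (-(a / t)) * exp (-(a * c)) := by
  rw [← exp_add, exp_le_exp, neg_mul, neg_div, mul_add, mul_one, add_div]
  have : a * c ≤ a * c / t := le_div_self (by positivity) ht ht1
  linarith

section CoshKernel

variable {a d : ℝ} {D : ℝ → ℝ}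

theorem integrable_exp_neg_mul_cosh_div (ha : 0 < a) (hd : 0 < d) (hD : AEStronglyMeasurable D)
    (hDd : ∀ s, d ≤ D s) : Integrable fun s => exp (-(a * cosh s)) / D s := by
  refine ((integrable_exp_neg_mul_cosh ha).div_const d).mono'
    ((integrable_exp_neg_mul_cosh ha).aestronglyMeasurable.div₀ hD) (.of_forall fun s => ?_)
  have hDs : 0 < D s := hd.trans_le (hDd s)
  rw [norm_of_nonneg (div_nonneg (exp_nonneg _) hDs.le)]
  gcongr
  exact hDd s

theorem integral_exp_neg_mul_one_add_cosh_div_le (ha : 0 < a) (hd : 0 < d)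
    (hD : AEStronglyMeasurable D) (hDd : ∀ s, d ≤ D s) {t : ℝ} (ht : 0 < t) (ht1 : t ≤ 1) :
    ∫ s, exp (-a * (1 + cosh s) / t) / D s ≤
      exp (-(a / t)) * ∫ s, exp (-(a * cosh s)) / D s := by
  rw [← integral_const_mul]
  refine integral_mono_of_nonneg (.of_forall fun s => ?_)
    ((integrable_exp_neg_mul_cosh_div ha hd hD hDd).const_mul _) (.of_forall fun s => ?_)
  · exact div_nonneg (exp_nonneg _) (hd.trans_le (hDd s)).le
  · dsimp only
    rw [← mul_div_assoc]
    gcongr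
    · exact (hd.trans_le (hDd s)).le
    · exact exp_neg_mul_one_add_div_le ha.le (zero_le_one.trans (one_le_cosh s)) ht ht1

theorem tendsto_integral_exp_neg_mul_one_add_cosh_div_div_pow (ha : 0 < a) (hd : 0 < d)
    (hD : AEStronglyMeasurable D) (hDd : ∀ s, d ≤ D s) (N : ℕ) :
    Tendsto (fun t => (∫ s, exp (-a * (1 + cosh s) / t) / D s) / t ^ N) (𝓝[>] 0) (𝓝 0) := by
  have hbound := (tendsto_exp_neg_div_div_pow_nhdsGT_zero ha N).mul_const
    (∫ s, exp (-(a * cosh s)) / D s)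
  rw [zero_mul] at hbound
  refine tendsto_of_tendsto_of_tendsto_of_le_of_le' tendsto_const_nhds hbound ?_ ?_
  · filter_upwards [self_mem_nhdsWithin] with t ht
    exact div_nonneg (integral_nonneg fun s => div_nonneg (exp_nonneg _)
      (hd.trans_le (hDd s)).le) (pow_nonneg (le_of_lt ht) N)
  · filter_upwards [Ioo_mem_nhdsGT one_pos] with t ⟨ht, ht1⟩
    rw [div_mul_eq_mul_div]
    gcongr
    exact integral_exp_neg_mul_one_add_cosh_div_le ha hd hD hDd ht ht1.le

end CoshKernel

theorem Real.cos_pi_sq_div_lt_one {θ : ℝ} (hθ : π / 2 < θ) : cos (π ^ 2 / θ) < 1 := by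
  have hθ0 : 0 < θ := by linarith [pi_pos]
  have hpos : 0 < π ^ 2 / θ := by positivity
  have hlt : π ^ 2 / θ < 2 * π := by rw [div_lt_iff₀ hθ0]; nlinarith [pi_pos]
  refine (cos_le_one _).lt_of_ne fun h => hpos.ne' ?_
  exact (cos_eq_one_iff_of_lt_of_lt (by linarith [pi_pos]) hlt).mp h

theorem Real.two_mul_one_sub_le_one_add_cosh_mul_cosh_sub {c : ℝ} (hc : c ≤ 1) (x y : ℝ) :
    2 * (1 - c) ≤ (1 + cosh x) * (cosh y - c) := by
  have hx : 2 ≤ 1 + cosh x := by linarith [one_le_cosh x]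
  have hy : 1 - c ≤ cosh y - c := by linarith [one_le_cosh y]
  nlinarith

/-- For `R > 0` and `θ ∈ (π/2, π)`, the integral
`∫_{−∞}^{∞} e^{−R²(1+cosh s)/(2t)} / ((1+cosh s)(cosh(πs/θ) − cos(π²/θ))) ds`
is `O(t^∞)` as `t → 0⁺`: divided by any power `t^N` it tends to `0`. -/
theorem sector_remainder_rapid_decay (R θ : ℝ) (hR : 0 < R)
    (hθ : θ ∈ Set.Ioo (Real.pi / 2) Real.pi) (N : ℕ) :
    Filter.Tendsto
      (fun t : ℝ =>
        (∫ s : ℝ, Real.exp (-R ^ 2 * (1 + Real.cosh s) / (2 * t)) /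
          ((1 + Real.cosh s) * (Real.cosh (Real.pi * s / θ) - Real.cos (Real.pi ^ 2 / θ))))
          / t ^ N)
      (nhdsWithin 0 (Set.Ioi 0)) (nhds 0) := by
  have hc := cos_pi_sq_div_lt_one hθ.1
  have key := tendsto_integral_exp_neg_mul_one_add_cosh_div_div_pow (a := R ^ 2 / 2)
    (by positivity) (by linarith : 0 < 2 * (1 - cos (π ^ 2 / θ))) (by fun_prop)
    (fun s => two_mul_one_sub_le_one_add_cosh_mul_cosh_sub hc.le s (π * s / θ)) N
  convert key using 7 with t s
  ring
end
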